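/- arXiv:2604.08732 — 4 statements merged into one kernel-verified Lean document; each statement's English description precedes it below -/
import Mathlib

section
/- Let 1 < p < ∞ and (x_i) ∈ ℓ^p(X) with ‖(x_i)‖_p = 1 and x_i ≠ 0 for all i. Let (x_i*) ∈ S_{(x_i)} ⊆ ℓ^q(X*). Then the identity map I : (S_{(x_i)}, weak*) → (S_{(x_i)}, weak) is continuous at (x_i*) if and only if for each i ∈ ℕ the normalized functional x_i*/‖x_i*‖ ∈ S_{x_i/‖x_i‖} is a point of continuity of the identity from (S_{x_i/‖x_i‖}, weak*) to (S_{x_i/‖x_i‖}, weak). -/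
open NormedSpace

/-- The topology on `A` induced by a pairing `A → (B → ℝ)` (with the product topology
on `B → ℝ`), i.e. the coarsest topology making all evaluations `a ↦ f a b` continuous. -/
def pairingTop {A B : Type*} (f : A → B → ℝ) : TopologicalSpace A :=
  TopologicalSpace.induced f Pi.topologicalSpace

/-- The weak* topology on `ℓ^q(X*)` viewed as a subspace of `ℓ^p(X)*` via the canonical
pairing `⟨(x_i*), (x_i)⟩ = ∑ x_i*(x_i)`. -/
noncomputable def wStarTop {X : Type*} [NormedAddCommGroup X] [NormedSpace ℝ X]
    (p q : ENNReal) [Fact (1 ≤ p)] [Fact (1 ≤ q)] :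
    TopologicalSpace (lp (fun _ : ℕ => StrongDual ℝ X) q) :=
  pairingTop fun φ (v : lp (fun _ : ℕ => X) p) => ∑' i, φ i (v i)

/-- The weak topology on `ℓ^q(X*)`. -/
noncomputable def wTop {X : Type*} [NormedAddCommGroup X] [NormedSpace ℝ X]
    (q : ENNReal) [Fact (1 ≤ q)] :
    TopologicalSpace (lp (fun _ : ℕ => StrongDual ℝ X) q) :=
  pairingTop fun φ (Λ : StrongDual ℝ (lp (fun _ : ℕ => StrongDual ℝ X) q)) => Λ φ

/-- The weak* topology on `X*`. -/
noncomputable def wStarTopDual (X : Type*) [NormedAddCommGroup X] [NormedSpace ℝ X] :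
    TopologicalSpace (StrongDual ℝ X) :=
  pairingTop fun (g : StrongDual ℝ X) (x : X) => g x

/-- The weak topology on `X*`. -/
noncomputable def wTopDual (X : Type*) [NormedAddCommGroup X] [NormedSpace ℝ X] :
    TopologicalSpace (StrongDual ℝ X) :=
  pairingTop fun (g : StrongDual ℝ X)
    (Λ : StrongDual ℝ (StrongDual ℝ X)) => Λ g

/-! The equality case of Hölder's inequality shows that every `ψ ∈ S_{(x_i)}` satisfies
`ψ_i(x_i) = ‖ψ_i‖ ‖x_i‖` and `‖ψ_i‖^q = ‖x_i‖^p`: all elements of `S_{(x_i)}` have the same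
coordinate norms, and `ψ_i / ‖ψ_i‖ ∈ S_{x_i/‖x_i‖}`.

If the identity of `S_{(x_i)}` is continuous at `φ`, compose it with the map
`S_{x_i/‖x_i‖} → S_{(x_i)}` replacing the `i`-th coordinate of `φ` by `‖φ_i‖ g`, which is
weak*-continuous, and with the weakly continuous left inverse `ψ ↦ ψ_i / ‖φ_i‖`. Conversely, on
`S_{(x_i)}` the coordinate norms are fixed, so tails are uniformly small (`q < ∞`) and
coordinatewise weak convergence implies weak convergence in `ℓ^q(X*)`. -/

open Filter Topology
open scoped ENNReal

section PairingTopology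

variable {A B : Type*}

theorem tendsto_nhds_pairingTop_iff {f : A → B → ℝ} {α : Type*} {l : Filter α} {u : α → A}
    {a : A} :
    Tendsto u l (@nhds A (pairingTop f) a) ↔ ∀ b, Tendsto (fun c => f (u c) b) l (𝓝 (f a b)) := by
  rw [pairingTop, nhds_induced, tendsto_comap_iff, tendsto_pi_nhds]
  rfl

/-- The weak topology `σ(E, E*)`; `wTop` and `wTopDual` are instances of it. -/
def weakTop (E : Type*) [NormedAddCommGroup E] [NormedSpace ℝ E] : TopologicalSpace E :=
  pairingTop fun (x : E) (Λ : StrongDual ℝ E) => Λ x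

theorem ContinuousLinearMap.tendsto_weakTop {E F : Type*} [NormedAddCommGroup E]
    [NormedSpace ℝ E] [NormedAddCommGroup F] [NormedSpace ℝ F] (L : E →L[ℝ] F) (x : E) :
    Tendsto L (@nhds E (weakTop E) x) (@nhds F (weakTop F) (L x)) :=
  tendsto_nhds_pairingTop_iff.2 fun Λ => tendsto_nhds_pairingTop_iff.1 tendsto_id (Λ.comp L)

end PairingTopology

namespace lp

variable {ι : Type*} {E : ι → Type*} [∀ i, NormedAddCommGroup (E i)] {p : ℝ≥0∞}

theorem norm_eq_of_forall_norm_apply_eq {f g : lp E p} (h : ∀ i, ‖f i‖ = ‖g i‖) :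
    ‖f‖ = ‖g‖ := by
  rcases p.trichotomy with rfl | rfl | hp
  · have hsupp : {i | f i ≠ 0} = {i | g i ≠ 0} := by
      ext i
      rw [Set.mem_ofPred_eq, Set.mem_ofPred_eq, ← norm_ne_zero_iff, h, norm_ne_zero_iff]
    rw [lp.norm_eq_card_dsupport, lp.norm_eq_card_dsupport,
      ← Set.ncard_eq_toFinset_card _ (lp.memℓp f).finite_dsupport,
      ← Set.ncard_eq_toFinset_card _ (lp.memℓp g).finite_dsupport, hsupp]
  · simp only [lp.norm_eq_ciSup, h]
  · simp only [lp.norm_eq_tsum_rpow hp, h]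

variable [DecidableEq ι]

theorem norm_sub_sum_single_eq {f g : lp E p} (h : ∀ i, ‖f i‖ = ‖g i‖)
    (s : Finset ι) :
    ‖f - ∑ i ∈ s, lp.single p i (f i)‖ = ‖g - ∑ i ∈ s, lp.single p i (g i)‖ := by
  refine norm_eq_of_forall_norm_apply_eq fun i => ?_
  simp only [lp.coeFn_sub, lp.coeFn_sum, lp.coeFn_single, Pi.sub_apply]
  rw [Finset.sum_apply, Finset.sum_apply, Finset.sum_pi_single, Finset.sum_pi_single]
  split_ifs <;> simp [h]

noncomputable def update (f : lp E p) (i : ι) (x : E i) : lp E p :=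
  f + lp.single p i (x - f i)

theorem coe_update (f : lp E p) (i : ι) (x : E i) :
    ⇑(lp.update f i x) = Function.update (⇑f) i x := by
  ext j
  by_cases hj : j = i
  · subst hj
    simp [update]
  · simp [update, hj]

theorem update_eq_self (f : lp E p) (i : ι) : lp.update f i (f i) = f := by
  simp [update]

theorem norm_update {f : lp E p} {i : ι} {x : E i} (hx : ‖x‖ = ‖f i‖) :
    ‖lp.update f i x‖ = ‖f‖ := by
  refine norm_eq_of_forall_norm_apply_eq fun j => ?_
  by_cases hj : j = i
  · subst hj
    simp [coe_update, hx]
  · simp [coe_update, hj]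

end lp

theorem Real.young_equality_of_hasSum_eq_one {ι : Type*} {P Q : ℝ} (hPQ : P.HolderConjugate Q)
    {a b c : ι → ℝ} (ha : ∀ i, 0 ≤ a i) (hb : ∀ i, 0 ≤ b i) (hc : ∀ i, c i ≤ a i * b i)
    (hsa : HasSum (fun i => a i ^ P) 1) (hsb : HasSum (fun i => b i ^ Q) 1) (hsc : HasSum c 1)
    (i : ι) : c i = a i * b i ∧ a i ^ P = b i ^ Q := by
  have hyoung : ∀ j, a j * b j ≤ a j ^ P / P + b j ^ Q / Q := fun j =>
    Real.young_inequality_of_nonneg (ha j) (hb j) hPQ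
  -- The Young defects are nonnegative and sum to `1/P + 1/Q - 1 = 0`.
  have hdefect : HasSum (fun j => a j ^ P / P + b j ^ Q / Q - c j) 0 := by
    have := ((hsa.div_const P).add (hsb.div_const Q)).sub hsc
    rwa [one_div, one_div, hPQ.inv_add_inv_eq_one, sub_self] at this
  have hci : c i = a i ^ P / P + b i ^ Q / Q :=
    (sub_eq_zero.1 <| congrFun ((hasSum_zero_iff_of_nonneg fun j =>
      sub_nonneg.2 ((hc j).trans (hyoung j))).1 hdefect) i).symm
  have hmul : c i = a i * b i := le_antisymm (hc i) (hci ▸ hyoung i)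
  exact ⟨hmul, (Real.young_inequality_eq_iff_of_nonneg (ha i) (hb i) hPQ).1 (hmul ▸ hci)⟩

section Pairing

variable {ι X : Type*} [NormedAddCommGroup X] [NormedSpace ℝ X] {p q : ℝ≥0∞}

noncomputable def lpPairing (ψ : lp (fun _ : ι => StrongDual ℝ X) q)
    (v : lp (fun _ : ι => X) p) : ℝ :=
  ∑' i, ψ i (v i)

theorem summable_lpPairing (hpq : p.toReal.HolderConjugate q.toReal)
    (ψ : lp (fun _ : ι => StrongDual ℝ X) q) (v : lp (fun _ : ι => X) p) :
    Summable fun i => ψ i (v i) :=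
  .of_norm_bounded (Real.summable_mul_of_Lp_Lq_of_nonneg hpq.symm (fun _ => norm_nonneg _)
      (fun _ => norm_nonneg _) ((lp.memℓp ψ).summable hpq.symm.pos)
      ((lp.memℓp v).summable hpq.pos))
    fun i => (ψ i).le_opNorm (v i)

variable [DecidableEq ι]

theorem lpPairing_single (ψ : lp (fun _ : ι => StrongDual ℝ X) q) (i : ι) (x : X) :
    lpPairing ψ (lp.single p i x) = ψ i x := by
  rw [lpPairing, tsum_eq_single i fun j hj => by
    rw [lp.single_apply_ne (E := fun _ : ι => X) p i x hj, map_zero], lp.single_apply_self]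

theorem lpPairing_update (hpq : p.toReal.HolderConjugate q.toReal)
    (ψ : lp (fun _ : ι => StrongDual ℝ X) q) (v : lp (fun _ : ι => X) p) (i : ι)
    (g : StrongDual ℝ X) :
    lpPairing (lp.update ψ i g) v = lpPairing ψ v + g (v i) - ψ i (v i) := by
  have hterms : (fun j => lp.update ψ i g j (v j)) =
      Function.update (fun j => ψ j (v j)) i (g (v i)) := by
    ext j
    by_cases hj : j = i
    · subst hj
      simp [lp.coe_update]
    · simp [lp.coe_update, hj]
  rw [lpPairing, hterms, ((summable_lpPairing hpq ψ v).hasSum.update i (g (v i))).tsum_eq,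
    lpPairing]
  ring

end Pairing

section NormingSets

variable {ι X : Type*} [NormedAddCommGroup X] [NormedSpace ℝ X]

/-- The paper's `S_x`. -/
def normingSet (x : X) : Set (StrongDual ℝ X) :=
  {g | ‖g‖ = 1 ∧ g x = 1}

variable {p : ℝ≥0∞}

/-- `S_{(x_i)}`, realised inside `ℓ^q(X*)`. -/
def lpNormingSet (q : ℝ≥0∞) (xs : lp (fun _ : ι => X) p) :
    Set (lp (fun _ : ι => StrongDual ℝ X) q) :=
  {ψ | ‖ψ‖ = 1 ∧ lpPairing ψ xs = 1}

variable {q : ℝ≥0∞} (hpq : p.toReal.HolderConjugate q.toReal) {xs : lp (fun _ : ι => X) p}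
  (hxs : ‖xs‖ = 1) {ψ φ : lp (fun _ : ι => StrongDual ℝ X) q}
include hpq hxs

theorem holder_equality_of_mem_lpNormingSet (hψ : ψ ∈ lpNormingSet q xs) (i : ι) :
    ψ i (xs i) = ‖ψ i‖ * ‖xs i‖ ∧ ‖ψ i‖ ^ q.toReal = ‖xs i‖ ^ p.toReal := by
  refine Real.young_equality_of_hasSum_eq_one hpq.symm (a := fun j => ‖ψ j‖)
    (b := fun j => ‖xs j‖) (c := fun j => ψ j (xs j)) (fun _ => norm_nonneg _)
    (fun _ => norm_nonneg _) (fun j => ?_) ?_ ?_ ?_ i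
  · exact (le_abs_self _).trans ((ψ j).le_opNorm (xs j))
  · simpa [hψ.1] using lp.hasSum_norm hpq.symm.pos ψ
  · simpa [hxs] using lp.hasSum_norm hpq.pos xs
  · exact hψ.2 ▸ (summable_lpPairing hpq ψ xs).hasSum

theorem norm_apply_eq_of_mem_lpNormingSet (hψ : ψ ∈ lpNormingSet q xs)
    (hφ : φ ∈ lpNormingSet q xs) (i : ι) : ‖ψ i‖ = ‖φ i‖ :=
  Real.rpow_left_injOn hpq.symm.pos.ne' (norm_nonneg _) (norm_nonneg _) <|
    (holder_equality_of_mem_lpNormingSet hpq hxs hψ i).2.trans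
      (holder_equality_of_mem_lpNormingSet hpq hxs hφ i).2.symm

theorem apply_ne_zero_of_mem_lpNormingSet (hψ : ψ ∈ lpNormingSet q xs) {i : ι}
    (hi : xs i ≠ 0) : ψ i ≠ 0 := by
  intro h
  have := (holder_equality_of_mem_lpNormingSet hpq hxs hψ i).2
  rw [h, norm_zero, Real.zero_rpow hpq.symm.pos.ne'] at this
  exact (Real.rpow_pos_of_pos (norm_pos_iff.2 hi) _).ne this

theorem inv_norm_smul_mem_normingSet (hψ : ψ ∈ lpNormingSet q xs) {i : ι} (hi : xs i ≠ 0) :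
    ‖ψ i‖⁻¹ • ψ i ∈ normingSet (‖xs i‖⁻¹ • xs i) := by
  have hψi := norm_ne_zero_iff.2 (apply_ne_zero_of_mem_lpNormingSet hpq hxs hψ hi)
  refine ⟨norm_smul_inv_norm (apply_ne_zero_of_mem_lpNormingSet hpq hxs hψ hi), ?_⟩
  rw [smul_apply, map_smul, smul_eq_mul, smul_eq_mul,
    (holder_equality_of_mem_lpNormingSet hpq hxs hψ i).1]
  field_simp [hψi, norm_ne_zero_iff.2 hi]

theorem update_smul_mem_lpNormingSet [DecidableEq ι] (hφ : φ ∈ lpNormingSet q xs) {i : ι}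
    (hi : xs i ≠ 0) {g : StrongDual ℝ X} (hg : g ∈ normingSet (‖xs i‖⁻¹ • xs i)) :
    lp.update φ i (‖φ i‖ • g) ∈ lpNormingSet q xs := by
  have hgx : g (xs i) = ‖xs i‖ := by
    have := hg.2
    rw [map_smul, smul_eq_mul, inv_mul_eq_one₀ (norm_ne_zero_iff.2 hi)] at this
    exact this.symm
  refine ⟨by rw [lp.norm_update (by rw [norm_smul, hg.1, mul_one, norm_norm]), hφ.1], ?_⟩
  rw [lpPairing_update hpq, smul_apply, smul_eq_mul, hgx,
    (holder_equality_of_mem_lpNormingSet hpq hxs hφ i).1, hφ.2]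
  ring

end NormingSets

theorem lp.tendsto_weakTop_of_norm_apply_eq {ι : Type*} {E : ι → Type*}
    [∀ i, NormedAddCommGroup (E i)] [∀ i, NormedSpace ℝ (E i)] {q : ℝ≥0∞} [Fact (1 ≤ q)]
    (hq : q ≠ ⊤) {α : Type*} {l : Filter α} {u : α → lp E q} {φ : lp E q}
    (hnorm : ∀ᶠ a in l, ∀ i, ‖u a i‖ = ‖φ i‖)
    (hcoord : ∀ i, Tendsto (fun a => u a i) l (@nhds _ (weakTop (E i)) (φ i))) :
    Tendsto u l (@nhds _ (weakTop (lp E q)) φ) := by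
  classical
  refine tendsto_nhds_pairingTop_iff.2 fun Λ => Metric.tendsto_nhds.2 fun ε hε => ?_
  set trunc : Finset ι → lp E q → lp E q := fun s f => ∑ i ∈ s, lp.single q i (f i)
  have htail : Tendsto (fun s => ‖Λ‖ * ‖φ - trunc s φ‖) atTop (𝓝 0) := by
    simpa [norm_sub_rev] using
      (tendsto_iff_norm_sub_tendsto_zero.1 (lp.hasSum_single hq φ)).const_mul ‖Λ‖
  obtain ⟨s, hs⟩ := (htail.eventually (gt_mem_nhds (show 0 < ε / 3 by positivity))).exists
  have hhead : Tendsto (fun a => Λ (trunc s (u a))) l (𝓝 (Λ (trunc s φ))) := by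
    simp only [trunc, map_sum]
    exact tendsto_finsetSum _ fun i _ =>
      tendsto_nhds_pairingTop_iff.1 (hcoord i) (Λ.comp (lp.singleContinuousLinearMap ℝ E q i))
  filter_upwards [hnorm, Metric.tendsto_nhds.1 hhead (ε / 3) (by positivity)] with a ha hhead_a
  have htail_a : ‖u a - trunc s (u a)‖ = ‖φ - trunc s φ‖ := lp.norm_sub_sum_single_eq ha s
  calc dist (Λ (u a)) (Λ φ)
      ≤ dist (Λ (u a)) (Λ (trunc s (u a))) + dist (Λ (trunc s (u a))) (Λ (trunc s φ))
          + dist (Λ (trunc s φ)) (Λ φ) := dist_triangle4 _ _ _ _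
    _ ≤ ‖Λ‖ * ‖φ - trunc s φ‖ + ε / 3 + ‖Λ‖ * ‖φ - trunc s φ‖ := by
        gcongr
        · rw [← htail_a, ← dist_eq_norm]
          exact Λ.dist_le_opNorm _ _
        · rw [dist_comm, ← dist_eq_norm]
          exact Λ.dist_le_opNorm _ _
    _ < ε := by linarith

section WeakStar

variable {X : Type*} [NormedAddCommGroup X] [NormedSpace ℝ X] {p q : ℝ≥0∞} [Fact (1 ≤ p)]
  [Fact (1 ≤ q)]

theorem tendsto_nhds_wStarTop_iff {α : Type*} {l : Filter α}
    {u : α → lp (fun _ : ℕ => StrongDual ℝ X) q} {φ : lp (fun _ : ℕ => StrongDual ℝ X) q} :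
    Tendsto u l (@nhds _ (wStarTop p q) φ) ↔
      ∀ v : lp (fun _ : ℕ => X) p, Tendsto (fun a => lpPairing (u a) v) l (𝓝 (lpPairing φ v)) :=
  tendsto_nhds_pairingTop_iff

theorem tendsto_smul_apply_wStarTop (φ : lp (fun _ : ℕ => StrongDual ℝ X) q) (i : ℕ) (c : ℝ) :
    Tendsto (fun ψ : lp (fun _ : ℕ => StrongDual ℝ X) q => c • ψ i)
      (@nhds _ (wStarTop p q) φ) (@nhds _ (wStarTopDual X) (c • φ i)) := by
  refine tendsto_nhds_pairingTop_iff.2 fun x => ?_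
  have := tendsto_nhds_wStarTop_iff.1 (tendsto_id (x := @nhds _ (wStarTop p q) φ))
    (lp.single p i x)
  simp only [id, lpPairing_single] at this
  simpa only [smul_apply, smul_eq_mul] using this.const_mul c

theorem tendsto_update_smul_wStarTop (hpq : p.toReal.HolderConjugate q.toReal)
    (φ : lp (fun _ : ℕ => StrongDual ℝ X) q) (i : ℕ) (c : ℝ) (g₀ : StrongDual ℝ X) :
    Tendsto (fun g => lp.update φ i (c • g)) (@nhds _ (wStarTopDual X) g₀)
      (@nhds _ (wStarTop p q) (lp.update φ i (c • g₀))) := by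
  refine tendsto_nhds_wStarTop_iff.2 fun v => ?_
  have : Tendsto (fun g : StrongDual ℝ X => g (v i)) (@nhds _ (wStarTopDual X) g₀)
      (𝓝 (g₀ (v i))) :=
    tendsto_nhds_pairingTop_iff.1 tendsto_id (v i)
  simp only [lpPairing_update hpq, smul_apply, smul_eq_mul]
  exact ((this.const_mul c).const_add _).sub_const _

end WeakStar

section PointsOfContinuity

variable {X : Type*} [NormedAddCommGroup X] [NormedSpace ℝ X] {p q : ℝ≥0∞} [Fact (1 ≤ p)]
  [Fact (1 ≤ q)] (hpq : p.toReal.HolderConjugate q.toReal) {xs : lp (fun _ : ℕ => X) p}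
  (hxs : ‖xs‖ = 1) {φ : lp (fun _ : ℕ => StrongDual ℝ X) q} (hφ : φ ∈ lpNormingSet q xs)
include hpq hxs hφ

theorem continuousWithinAt_normingSet_of_continuousWithinAt_lpNormingSet {i : ℕ}
    (hi : xs i ≠ 0)
    (H : @ContinuousWithinAt _ _ (wStarTop p q) (wTop q) id (lpNormingSet q xs) φ) :
    @ContinuousWithinAt _ _ (wStarTopDual X) (wTopDual X) id
      (normingSet (‖xs i‖⁻¹ • xs i)) (‖φ i‖⁻¹ • φ i) := by
  have hc : ‖φ i‖ ≠ 0 := norm_ne_zero_iff.2 (apply_ne_zero_of_mem_lpNormingSet hpq hxs hφ hi)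
  have hT := tendsto_update_smul_wStarTop hpq φ i ‖φ i‖ (‖φ i‖⁻¹ • φ i)
  rw [smul_inv_smul₀ hc, lp.update_eq_self] at hT
  have hembed : Tendsto (fun g => lp.update φ i (‖φ i‖ • g))
      (@nhdsWithin _ (wStarTopDual X) (‖φ i‖⁻¹ • φ i) (normingSet (‖xs i‖⁻¹ • xs i)))
      (@nhdsWithin _ (wStarTop p q) φ (lpNormingSet q xs)) :=
    tendsto_inf.2 ⟨hT.mono_left inf_le_left,
      tendsto_principal.2 <| (@eventually_mem_nhdsWithin _ (wStarTopDual X) _ _).mono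
        fun g hg => update_smul_mem_lpNormingSet hpq hxs hφ hi hg⟩
  have := ((‖φ i‖⁻¹ • lp.evalCLM ℝ (fun _ : ℕ => StrongDual ℝ X) q i).tendsto_weakTop φ).comp
    (Tendsto.comp H hembed)
  have hretract : (‖φ i‖⁻¹ • lp.evalCLM ℝ (fun _ : ℕ => StrongDual ℝ X) q i) ∘ id ∘
      (fun g => lp.update φ i (‖φ i‖ • g)) = id := by
    funext g
    change ‖φ i‖⁻¹ • lp.update φ i (‖φ i‖ • g) i = g
    rw [lp.coe_update, Function.update_self, inv_smul_smul₀ hc]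
  rw [hretract] at this
  exact this

theorem continuousWithinAt_lpNormingSet_of_forall_continuousWithinAt_normingSet
    (hq : q ≠ ⊤) (hne : ∀ i, xs i ≠ 0)
    (H : ∀ i, @ContinuousWithinAt _ _ (wStarTopDual X) (wTopDual X) id
      (normingSet (‖xs i‖⁻¹ • xs i)) (‖φ i‖⁻¹ • φ i)) :
    @ContinuousWithinAt _ _ (wStarTop p q) (wTop q) id (lpNormingSet q xs) φ := by
  have hS : ∀ᶠ ψ in @nhdsWithin _ (wStarTop p q) φ (lpNormingSet q xs),
      ψ ∈ lpNormingSet q xs :=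
    @eventually_mem_nhdsWithin _ (wStarTop p q) _ _
  refine lp.tendsto_weakTop_of_norm_apply_eq hq
    (hS.mono fun ψ hψ => norm_apply_eq_of_mem_lpNormingSet hpq hxs hψ hφ) fun i => ?_
  have hc : ‖φ i‖ ≠ 0 :=
    norm_ne_zero_iff.2 (apply_ne_zero_of_mem_lpNormingSet hpq hxs hφ (hne i))
  have hnormalize : Tendsto (fun ψ : lp (fun _ : ℕ => StrongDual ℝ X) q => ‖φ i‖⁻¹ • ψ i)
      (@nhdsWithin _ (wStarTop p q) φ (lpNormingSet q xs))
      (@nhdsWithin _ (wStarTopDual X) (‖φ i‖⁻¹ • φ i) (normingSet (‖xs i‖⁻¹ • xs i))) :=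
    tendsto_inf.2 ⟨(tendsto_smul_apply_wStarTop φ i _).mono_left inf_le_left,
      tendsto_principal.2 <| hS.mono fun ψ hψ => by
        simpa [norm_apply_eq_of_mem_lpNormingSet hpq hxs hψ hφ i] using
          inv_norm_smul_mem_normingSet hpq hxs hψ (hne i)⟩
  have := ((‖φ i‖ • ContinuousLinearMap.id ℝ (StrongDual ℝ X)).tendsto_weakTop _).comp
    (Tendsto.comp (H i) hnormalize)
  simpa [Function.comp_def, smul_smul, mul_inv_cancel₀ hc, inv_mul_cancel₀ hc] using this

end PointsOfContinuity

theorem stmt6_general {X : Type*} [NormedAddCommGroup X] [NormedSpace ℝ X]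
    (p q : ENNReal) [Fact (1 ≤ p)] [Fact (1 ≤ q)]
    (hp : 1 < p) (hp' : p ≠ ⊤) (hpq : 1 / p + 1 / q = 1)
    (xs : lp (fun _ : ℕ => X) p) (hxs : ‖xs‖ = 1) (hne : ∀ i, xs i ≠ 0)
    (S : Set (lp (fun _ : ℕ => StrongDual ℝ X) q))
    (hS : S = {ψ | ‖ψ‖ = 1 ∧ ∑' i, ψ i (xs i) = 1})
    (φ : lp (fun _ : ℕ => StrongDual ℝ X) q) (hφ : φ ∈ S) :
    @ContinuousWithinAt _ _ (wStarTop p q) (wTop q) id S φ ↔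
      ∀ i, @ContinuousWithinAt _ _ (wStarTopDual X) (wTopDual X) id
        {g : StrongDual ℝ X | ‖g‖ = 1 ∧ g (‖xs i‖⁻¹ • xs i) = 1}
        (‖φ i‖⁻¹ • φ i) := by
  subst hS
  have hp_real : 1 < p.toReal := by
    simpa using (ENNReal.toReal_lt_toReal ENNReal.one_ne_top hp').2 hp
  have hpq_real : p.toReal.HolderConjugate q.toReal :=
    (ENNReal.HolderConjugate.toReal_iff hp_real).2
      (ENNReal.holderConjugate_iff.2 (by simpa only [one_div] using hpq))
  have hq : q ≠ ⊤ := by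
    rintro rfl
    exact hpq_real.symm.pos.ne' ENNReal.toReal_top
  exact ⟨fun H i => continuousWithinAt_normingSet_of_continuousWithinAt_lpNormingSet
      hpq_real hxs hφ (hne i) H,
    continuousWithinAt_lpNormingSet_of_forall_continuousWithinAt_normingSet
      hpq_real hxs hφ hq hne⟩

/-- Let `(x_i) ∈ ℓ^p(X)` be a unit vector with all `x_i ≠ 0`, and let `(x_i*)` belong to
the state space `S_{(x_i)} ⊆ ℓ^q(X*)`.  Then the identity `(S_{(x_i)}, w*) → (S_{(x_i)}, w)`
is continuous at `(x_i*)` iff for each `i` the normalized functional `x_i*/‖x_i*‖` is a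
`w*`-`w` point of continuity of the state space `S_{x_i/‖x_i‖}`. -/
theorem stmt6 {X : Type*} [NormedAddCommGroup X] [NormedSpace ℝ X] [CompleteSpace X]
    (p q : ENNReal) [Fact (1 ≤ p)] [Fact (1 ≤ q)]
    (hp : 1 < p) (hp' : p ≠ ⊤) (hpq : 1 / p + 1 / q = 1)
    (xs : lp (fun _ : ℕ => X) p) (hxs : ‖xs‖ = 1) (hne : ∀ i, xs i ≠ 0)
    (S : Set (lp (fun _ : ℕ => StrongDual ℝ X) q))
    (hS : S = {ψ | ‖ψ‖ = 1 ∧ ∑' i, ψ i (xs i) = 1})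
    (φ : lp (fun _ : ℕ => StrongDual ℝ X) q) (hφ : φ ∈ S) :
    @ContinuousWithinAt _ _ (wStarTop p q) (wTop q) id S φ ↔
      ∀ i, @ContinuousWithinAt _ _ (wStarTopDual X) (wTopDual X) id
        {g : StrongDual ℝ X | ‖g‖ = 1 ∧ g (‖xs i‖⁻¹ • xs i) = 1}
        (‖φ i‖⁻¹ • φ i) :=
  stmt6_general p q hp hp' hpq xs hxs hne S hS φ hφ
end

section
/- Let 1 < p < ∞ and (x_i) ∈ ℓ^p(X) with ‖(x_i)‖_p = 1 and x_i ≠ 0 for all i. Let (x_i*) ∈ S_{(x_i)}. Then the identity map I : (S_{(x_i)}, weak*) → (S_{(x_i)}, norm) is continuous at (x_i*) if and only if for each i ∈ ℕ the functional x_i*/‖x_i*‖ ∈ S_{x_i/‖x_i‖} is a point of weak*-to-norm continuity of the identity on S_{x_i/‖x_i‖}. -/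
open NormedSpace

/-!
A functional `ψ` lies in `S_{(x_i)}` iff Hölder's inequality `∑ ψ_i(x_i) ≤ ‖ψ‖_q ‖x‖_p` is an
equality term by term, i.e. iff `‖ψ_i‖ = ‖x_i‖^(p-1)` and `ψ_i / ‖x_i‖^(p-1) ∈ S_{x_i/‖x_i‖}` for
every `i`. So `S_{(x_i)}` is the product of the rescaled state spaces `‖x_i‖^(p-1) S_{x_i/‖x_i‖}`.

If `φ` is a point of continuity, so is each `φ_i/‖φ_i‖`: the map putting `‖x_i‖^(p-1) g` into the
`i`-th coordinate of `φ` embeds `S_{x_i/‖x_i‖}` into `S_{(x_i)}`, weak*-continuously and as a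
topological embedding for the norms. Conversely, the coordinate projections give norm convergence
in each coordinate, and since `‖ψ_i‖ = ‖φ_i‖` on `S_{(x_i)}`, dominated convergence in `ℓ^q`
upgrades this to norm convergence.
-/

open Filter Topology Set ENNReal

section PairingTopology

variable {A B : Type*} (f : A → B → ℝ)

lemma continuous_pairingTop_apply (b : B) : Continuous[pairingTop f, inferInstance] (f · b) := by
  let := pairingTop f
  exact (continuous_apply b).comp continuous_induced_dom

lemma continuous_pairingTop_iff {C : Type*} {tC : TopologicalSpace C} {Φ : C → A} :
    Continuous[tC, pairingTop f] Φ ↔ ∀ b, Continuous[tC, inferInstance] fun c => f (Φ c) b :=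
  continuous_induced_rng.trans continuous_pi_iff

variable {C D : Type*} [TopologicalSpace C] (g : C → D → ℝ) {Φ : A → C} {s : Set A} {t : Set C}
  {a : A}

lemma tendsto_of_continuousWithinAt_id (hΦ : Continuous[pairingTop f, pairingTop g] Φ)
    (hst : MapsTo Φ s t) (h : @ContinuousWithinAt C C (pairingTop g) _ id t (Φ a)) :
    Tendsto Φ (@nhdsWithin A (pairingTop f) a s) (𝓝 (Φ a)) :=
  Tendsto.comp (f := Φ) h <|
    @ContinuousWithinAt.tendsto_nhdsWithin _ _ (pairingTop f) (pairingTop g) _ _ _ _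
      (@Continuous.continuousWithinAt _ _ (pairingTop f) (pairingTop g) _ _ _ hΦ) hst

lemma continuousWithinAt_id_of_isInducing [TopologicalSpace A]
    (hΦ : Continuous[pairingTop f, pairingTop g] Φ) (hind : IsInducing Φ) (hst : MapsTo Φ s t)
    (h : @ContinuousWithinAt C C (pairingTop g) _ id t (Φ a)) :
    @ContinuousWithinAt A A (pairingTop f) _ id s a :=
  hind.tendsto_nhds_iff.2 (tendsto_of_continuousWithinAt_id f g hΦ hst h)

lemma Continuous.comp_pairingTop_apply {h : ℝ → ℝ} (hh : Continuous h) (b : B) :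
    Continuous[pairingTop f, inferInstance] fun a => h (f a b) := by
  let := pairingTop f
  exact hh.comp (continuous_pairingTop_apply f b)

end PairingTopology

lemma Real.rpow_eq_rpow_iff_eq_rpow_sub_one {a b r s : ℝ} (hrs : r.HolderConjugate s)
    (ha : 0 ≤ a) (hb : 0 ≤ b) : a ^ s = b ^ r ↔ a = b ^ (r - 1) := by
  rw [← Real.rpow_left_inj ha (by positivity) hrs.symm.ne_zero, ← Real.rpow_mul hb,
    hrs.sub_one_mul_conj]

lemma lp.tendsto_of_tendsto_apply_of_norm_sub_le {ι α : Type*} {E : ι → Type*}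
    [∀ i, NormedAddCommGroup (E i)] {p : ℝ≥0∞} [Fact (1 ≤ p)] (hp : p ≠ ⊤) {l : Filter α}
    {F : α → lp E p} {f : lp E p} {b : ι → ℝ} (hb : Memℓp b p)
    (hF : ∀ᶠ a in l, ∀ i, ‖F a i - f i‖ ≤ b i) (h : ∀ i, Tendsto (fun a => F a i) l (𝓝 (f i))) :
    Tendsto F l (𝓝 f) := by
  have hp0 : 0 < p.toReal := ENNReal.toReal_pos (zero_lt_one.trans_le Fact.out).ne' hp
  have hterm (i : ι) : Tendsto (fun a => ‖F a i - f i‖ ^ p.toReal) l (𝓝 0) := by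
    simpa [Real.zero_rpow hp0.ne'] using
      ((tendsto_iff_norm_sub_tendsto_zero.1 (h i)).rpow_const (Or.inr hp0.le))
  have hsum : Tendsto (fun a => ‖F a - f‖ ^ p.toReal) l (𝓝 0) := by
    simp only [lp.norm_rpow_eq_tsum hp0, lp.coeFn_sub, Pi.sub_apply]
    simpa using tendsto_tsum_of_dominated_convergence (hb.summable hp0) hterm <|
      hF.mono fun a ha i => by
        rw [Real.norm_of_nonneg (by positivity)]
        exact Real.rpow_le_rpow (norm_nonneg _) ((ha i).trans (le_abs_self _)) hp0.le
  rw [tendsto_iff_norm_sub_tendsto_zero]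
  simpa [Real.zero_rpow (inv_ne_zero hp0.ne'), Real.rpow_rpow_inv (norm_nonneg _) hp0.ne'] using
    hsum.rpow_const (p := p.toReal⁻¹) (Or.inr (inv_nonneg.2 hp0.le))

section StateSpace

variable {X : Type*} [NormedAddCommGroup X] [NormedSpace ℝ X]

def stateSpace (x : X) : Set (StrongDual ℝ X) := {g | ‖g‖ = 1 ∧ g x = 1}

lemma inv_smul_mem_stateSpace_iff {x : X} (hx : x ≠ 0) {c : ℝ} (hc : 0 < c)
    (g : StrongDual ℝ X) :
    c⁻¹ • g ∈ stateSpace (‖x‖⁻¹ • x) ↔ ‖g‖ = c ∧ g x = c * ‖x‖ := by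
  have hx' : ‖x‖ ≠ 0 := norm_ne_zero_iff.2 hx
  simp only [stateSpace, mem_ofPred_eq, norm_smul, Real.norm_of_nonneg (inv_nonneg.2 hc.le),
    FunLike.coe_smul, Pi.smul_apply, map_smul, smul_eq_mul, inv_mul_eq_one₀ hc.ne',
    ← mul_assoc, ← mul_inv, inv_mul_eq_one₀ (mul_ne_zero hx' hc.ne')]
  exact and_congr eq_comm (by rw [eq_comm, mul_comm])

variable {p q : ℝ≥0∞}

lemma summable_apply_apply (hpq : p.toReal.HolderConjugate q.toReal)
    (ψ : lp (fun _ : ℕ => StrongDual ℝ X) q) (v : lp (fun _ : ℕ => X) p) :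
    Summable fun i => ψ i (v i) :=
  .of_norm_bounded (Real.summable_mul_of_Lp_Lq_of_nonneg hpq.symm (fun i => norm_nonneg (ψ i))
    (fun i => norm_nonneg (v i)) ((lp.memℓp ψ).summable hpq.symm.pos)
    ((lp.memℓp v).summable hpq.pos)) fun i => (ψ i).le_opNorm (v i)

lemma tsum_apply_single (ψ : lp (fun _ : ℕ => StrongDual ℝ X) q) (i : ℕ) (x : X) :
    ∑' j, ψ j ((lp.single p i x : lp (fun _ : ℕ => X) p) j) = ψ i x :=
  (tsum_eq_single i fun j hj => by simp [hj]).trans (by simp)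

lemma tsum_add_single_apply (hpq : p.toReal.HolderConjugate q.toReal)
    (ψ : lp (fun _ : ℕ => StrongDual ℝ X) q) (i : ℕ) (g : StrongDual ℝ X)
    (v : lp (fun _ : ℕ => X) p) :
    ∑' j, (ψ + lp.single q i g : lp (fun _ : ℕ => StrongDual ℝ X) q) j (v j) =
      ∑' j, ψ j (v j) + g (v i) := by
  have hsingle :
      ∑' j, (lp.single q i g : lp (fun _ : ℕ => StrongDual ℝ X) q) j (v j) = g (v i) :=
    (tsum_eq_single i fun j hj => by simp [hj]).trans (by simp)
  rw [← hsingle, ← (summable_apply_apply hpq ψ v).tsum_add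
    (summable_apply_apply hpq (lp.single q i g) v)]
  rfl

variable (q) in
def lpStateSpace (xs : lp (fun _ : ℕ => X) p) : Set (lp (fun _ : ℕ => StrongDual ℝ X) q) :=
  {ψ | ‖ψ‖ = 1 ∧ ∑' i, ψ i (xs i) = 1}

variable {xs : lp (fun _ : ℕ => X) p}

lemma apply_eq_norm_mul_norm_of_mem_lpStateSpace (hpq : p.toReal.HolderConjugate q.toReal)
    (hxs : ‖xs‖ = 1) {ψ : lp (fun _ : ℕ => StrongDual ℝ X) q} (hψ : ψ ∈ lpStateSpace q xs)
    (i : ℕ) : ψ i (xs i) = ‖ψ i‖ * ‖xs i‖ ∧ ‖ψ i‖ ^ q.toReal = ‖xs i‖ ^ p.toReal := by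
  set b : ℕ → ℝ := fun j => ‖ψ j‖ ^ q.toReal / q.toReal + ‖xs j‖ ^ p.toReal / p.toReal
  have hholder j : ψ j (xs j) ≤ ‖ψ j‖ * ‖xs j‖ := (le_abs_self _).trans ((ψ j).le_opNorm _)
  have hyoung j : ‖ψ j‖ * ‖xs j‖ ≤ b j :=
    Real.young_inequality_of_nonneg (norm_nonneg _) (norm_nonneg _) hpq.symm
  have hb : HasSum b 1 := by
    have := ((lp.hasSum_norm hpq.symm.pos ψ).div_const q.toReal).add
      ((lp.hasSum_norm hpq.pos xs).div_const p.toReal)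
    rwa [hψ.1, hxs, Real.one_rpow, Real.one_rpow, add_comm, one_div, one_div,
      hpq.inv_add_inv_eq_one] at this
  -- Summing Young's inequality gives `1 = ∑ ψ j (xs j) ≤ ∑ b j = 1`, so every term is an equality.
  have heq : ψ i (xs i) = b i := by
    by_contra hne
    have := (summable_apply_apply hpq ψ xs).tsum_lt_tsum (fun j => (hholder j).trans (hyoung j))
      ((hholder i).trans (hyoung i) |>.lt_of_ne hne) hb.summable
    rw [hψ.2, hb.tsum_eq] at this
    exact this.false
  have hyoung_eq : ‖ψ i‖ * ‖xs i‖ = b i := le_antisymm (hyoung i) (heq ▸ hholder i)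
  exact ⟨hyoung_eq ▸ heq, (Real.young_inequality_eq_iff_of_nonneg (norm_nonneg _) (norm_nonneg _)
    hpq.symm).1 hyoung_eq⟩

lemma mem_lpStateSpace_iff (hpq : p.toReal.HolderConjugate q.toReal) (hxs : ‖xs‖ = 1)
    (ψ : lp (fun _ : ℕ => StrongDual ℝ X) q) :
    ψ ∈ lpStateSpace q xs ↔ ∀ i, ‖ψ i‖ = ‖xs i‖ ^ (p.toReal - 1) ∧
      ψ i (xs i) = ‖xs i‖ ^ (p.toReal - 1) * ‖xs i‖ := by
  have hpow (i : ℕ) : ‖xs i‖ ^ (p.toReal - 1) * ‖xs i‖ = ‖xs i‖ ^ p.toReal := by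
    rw [← Real.rpow_add_one' (norm_nonneg _) (by linarith [hpq.pos]), sub_add_cancel]
  have hnorm_iff (i : ℕ) := Real.rpow_eq_rpow_iff_eq_rpow_sub_one hpq (norm_nonneg (ψ i))
    (norm_nonneg (xs i))
  constructor
  · intro hψ i
    obtain ⟨happly, hnorm⟩ := apply_eq_norm_mul_norm_of_mem_lpStateSpace hpq hxs hψ i
    rw [← (hnorm_iff i).1 hnorm]
    exact ⟨rfl, happly⟩
  · intro h
    refine ⟨?_, ?_⟩
    · rw [← Real.rpow_left_inj (lp.norm_nonneg' _) zero_le_one hpq.symm.ne_zero,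
        lp.norm_rpow_eq_tsum hpq.symm.pos, tsum_congr fun i => (hnorm_iff i).2 (h i).1,
        ← lp.norm_rpow_eq_tsum hpq.pos, hxs, Real.one_rpow, Real.one_rpow]
    · rw [tsum_congr fun i => (h i).2.trans (hpow i), ← lp.norm_rpow_eq_tsum hpq.pos, hxs,
        Real.one_rpow]

lemma mem_lpStateSpace_iff_forall_inv_smul_mem_stateSpace
    (hpq : p.toReal.HolderConjugate q.toReal) (hxs : ‖xs‖ = 1) (hne : ∀ i, xs i ≠ 0)
    (ψ : lp (fun _ : ℕ => StrongDual ℝ X) q) :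
    ψ ∈ lpStateSpace q xs ↔
      ∀ i, (‖xs i‖ ^ (p.toReal - 1))⁻¹ • ψ i ∈ stateSpace (‖xs i‖⁻¹ • xs i) := by
  simp only [mem_lpStateSpace_iff hpq hxs,
    inv_smul_mem_stateSpace_iff (hne _) (Real.rpow_pos_of_pos (norm_pos_iff.2 (hne _)) _)]

end StateSpace

section PointOfContinuity

variable {X : Type*} [NormedAddCommGroup X] [NormedSpace ℝ X] {p q : ℝ≥0∞} [Fact (1 ≤ p)]
  [Fact (1 ≤ q)] {xs : lp (fun _ : ℕ => X) p} {φ : lp (fun _ : ℕ => StrongDual ℝ X) q}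

theorem continuousWithinAt_stateSpace_of_continuousWithinAt_lpStateSpace
    (hpq : p.toReal.HolderConjugate q.toReal) (hxs : ‖xs‖ = 1) (hne : ∀ i, xs i ≠ 0)
    (hφ : φ ∈ lpStateSpace q xs)
    (h : @ContinuousWithinAt _ _ (wStarTop p q) _ id (lpStateSpace q xs) φ) (i : ℕ) :
    @ContinuousWithinAt _ _ (wStarTopDual X) _ id (stateSpace (‖xs i‖⁻¹ • xs i))
      (‖φ i‖⁻¹ • φ i) := by
  have hmem := mem_lpStateSpace_iff_forall_inv_smul_mem_stateSpace hpq hxs hne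
  set c := ‖xs i‖ ^ (p.toReal - 1)
  have hc : c ≠ 0 := (Real.rpow_pos_of_pos (norm_pos_iff.2 (hne i)) _).ne'
  have hφi : ‖φ i‖ = c := ((mem_lpStateSpace_iff hpq hxs φ).1 hφ i).1
  let Φ (g : StrongDual ℝ X) : lp (fun _ : ℕ => StrongDual ℝ X) q :=
    φ + lp.single q i (c • g - φ i)
  have hΦ_apply_self (g : StrongDual ℝ X) : Φ g i = c • g := by
    simp only [Φ, lp.coeFn_add, Pi.add_apply, lp.single_apply_self, add_sub_cancel]
  have hΦ_apply_of_ne (g : StrongDual ℝ X) {j : ℕ} (hj : j ≠ i) : Φ g j = φ j := by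
    simp only [Φ, lp.coeFn_add, Pi.add_apply, lp.single_apply_ne q i _ hj, add_zero]
  have hweak : Continuous[wStarTopDual X, wStarTop p q] Φ := by
    refine (continuous_pairingTop_iff _).2 fun v => ?_
    have hpair (g : StrongDual ℝ X) :
        ∑' j, Φ g j (v j) = ∑' j, φ j (v j) + (c * g (v i) - φ i (v i)) := by
      rw [tsum_add_single_apply hpq]
      rfl
    simp only [hpair]
    exact Continuous.comp_pairingTop_apply _
      (continuous_const.add ((continuous_const_mul c).sub continuous_const)) (v i)
  have hind : IsInducing Φ :=
    (Homeomorph.addLeft φ).isInducing.comp <|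
      (Isometry.isEmbedding (lp.isometry_single i)).isInducing.comp <|
      (Homeomorph.subRight (φ i)).isInducing.comp (Homeomorph.smulOfNeZero c hc).isInducing
  have hmaps : MapsTo Φ (stateSpace (‖xs i‖⁻¹ • xs i)) (lpStateSpace q xs) := by
    intro g hg
    refine (hmem _).2 fun j => ?_
    rcases eq_or_ne j i with rfl | hj
    · rwa [hΦ_apply_self, inv_smul_smul₀ hc]
    · rw [hΦ_apply_of_ne g hj]
      exact (hmem φ).1 hφ j
  have hΦ : Φ (‖φ i‖⁻¹ • φ i) = φ := by
    simp only [Φ, hφi, smul_inv_smul₀ hc, sub_self, lp.single_zero, add_zero]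
  exact continuousWithinAt_id_of_isInducing _ _ hweak hind hmaps (by rwa [hΦ])

theorem tendsto_apply_of_continuousWithinAt_stateSpace
    (hpq : p.toReal.HolderConjugate q.toReal) (hxs : ‖xs‖ = 1) (hne : ∀ i, xs i ≠ 0)
    (hφ : φ ∈ lpStateSpace q xs) (i : ℕ)
    (h : @ContinuousWithinAt _ _ (wStarTopDual X) _ id (stateSpace (‖xs i‖⁻¹ • xs i))
      (‖φ i‖⁻¹ • φ i)) :
    Tendsto (fun ψ : lp (fun _ : ℕ => StrongDual ℝ X) q => ψ i)
      (@nhdsWithin _ (wStarTop p q) φ (lpStateSpace q xs)) (𝓝 (φ i)) := by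
  set c := ‖xs i‖ ^ (p.toReal - 1)
  have hc : c ≠ 0 := (Real.rpow_pos_of_pos (norm_pos_iff.2 (hne i)) _).ne'
  have hφi : ‖φ i‖ = c := ((mem_lpStateSpace_iff hpq hxs φ).1 hφ i).1
  let Ψ (ψ : lp (fun _ : ℕ => StrongDual ℝ X) q) : StrongDual ℝ X := c⁻¹ • ψ i
  have hweak : Continuous[wStarTop p q, wStarTopDual X] Ψ := by
    refine (continuous_pairingTop_iff _).2 fun x => ?_
    have hpair (ψ : lp (fun _ : ℕ => StrongDual ℝ X) q) :
        Ψ ψ x = c⁻¹ * ∑' j, ψ j ((lp.single p i x : lp (fun _ : ℕ => X) p) j) := by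
      rw [tsum_apply_single]
      rfl
    simp only [hpair]
    exact (continuous_const_mul c⁻¹).comp_pairingTop_apply
      (fun (ψ : lp (fun _ : ℕ => StrongDual ℝ X) q) (v : lp (fun _ : ℕ => X) p) =>
        ∑' j, ψ j (v j))
      (lp.single p i x)
  have hmaps : MapsTo Ψ (lpStateSpace q xs) (stateSpace (‖xs i‖⁻¹ • xs i)) := fun ψ hψ =>
    (mem_lpStateSpace_iff_forall_inv_smul_mem_stateSpace hpq hxs hne ψ).1 hψ i
  have hΨφ : Ψ φ = ‖φ i‖⁻¹ • φ i := by rw [hφi]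
  have := (tendsto_of_continuousWithinAt_id _ _ hweak hmaps (a := φ) (hΨφ ▸ h)).const_smul c
  simp only [Ψ, smul_inv_smul₀ hc] at this
  exact this

theorem continuousWithinAt_lpStateSpace_of_forall_continuousWithinAt_stateSpace
    (hpq : p.toReal.HolderConjugate q.toReal) (hxs : ‖xs‖ = 1) (hne : ∀ i, xs i ≠ 0)
    (hφ : φ ∈ lpStateSpace q xs)
    (h : ∀ i, @ContinuousWithinAt _ _ (wStarTopDual X) _ id (stateSpace (‖xs i‖⁻¹ • xs i))
      (‖φ i‖⁻¹ • φ i)) :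
    @ContinuousWithinAt _ _ (wStarTop p q) _ id (lpStateSpace q xs) φ := by
  have hnorm {ψ} (hψ : ψ ∈ lpStateSpace q xs) i := ((mem_lpStateSpace_iff hpq hxs ψ).1 hψ i).1
  refine lp.tendsto_of_tendsto_apply_of_norm_sub_le (toReal_pos_iff.1 hpq.symm.pos).2.ne
    ((memℓp_norm_iff.2 (lp.memℓp φ)).const_mul 2) ?_
    fun i => tendsto_apply_of_continuousWithinAt_stateSpace hpq hxs hne hφ i (h i)
  filter_upwards [@self_mem_nhdsWithin _ (wStarTop p q) φ _] with ψ hψ i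
  calc ‖ψ i - φ i‖ ≤ ‖ψ i‖ + ‖φ i‖ := norm_sub_le _ _
    _ = 2 * ‖φ i‖ := by rw [hnorm hψ, hnorm hφ, two_mul]

end PointOfContinuity

theorem stmt7_general {X : Type*} [NormedAddCommGroup X] [NormedSpace ℝ X]
    (p q : ENNReal) [Fact (1 ≤ p)] [Fact (1 ≤ q)]
    (hp : 1 < p) (hp' : p ≠ ⊤) (hpq : 1 / p + 1 / q = 1)
    (xs : lp (fun _ : ℕ => X) p) (hxs : ‖xs‖ = 1) (hne : ∀ i, xs i ≠ 0)
    (S : Set (lp (fun _ : ℕ => StrongDual ℝ X) q))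
    (hS : S = {ψ | ‖ψ‖ = 1 ∧ ∑' i, ψ i (xs i) = 1})
    (φ : lp (fun _ : ℕ => StrongDual ℝ X) q) (hφ : φ ∈ S) :
    @ContinuousWithinAt _ _ (wStarTop p q) inferInstance id S φ ↔
      ∀ i, @ContinuousWithinAt _ _ (wStarTopDual X) inferInstance id
        {g : StrongDual ℝ X | ‖g‖ = 1 ∧ g (‖xs i‖⁻¹ • xs i) = 1}
        (‖φ i‖⁻¹ • φ i) := by
  have hconj : p.toReal.HolderConjugate q.toReal :=
    (HolderConjugate.toReal_iff ((toReal_lt_toReal one_ne_top hp').2 hp)).2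
      (holderConjugate_iff.2 (by simpa only [one_div] using hpq))
  subst hS
  exact ⟨continuousWithinAt_stateSpace_of_continuousWithinAt_lpStateSpace hconj hxs hne hφ,
    continuousWithinAt_lpStateSpace_of_forall_continuousWithinAt_stateSpace hconj hxs hne hφ⟩

/-- Let `(x_i) ∈ ℓ^p(X)` be a unit vector with all `x_i ≠ 0`, and let `(x_i*)` belong to
the state space `S_{(x_i)} ⊆ ℓ^q(X*)`.  Then the identity `(S_{(x_i)}, w*) → (S_{(x_i)}, ‖·‖)`
is continuous at `(x_i*)` iff for each `i` the normalized functional `x_i*/‖x_i*‖` is a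
`w*`-`‖·‖` point of continuity of the state space `S_{x_i/‖x_i‖}`. -/
theorem stmt7 {X : Type*} [NormedAddCommGroup X] [NormedSpace ℝ X] [CompleteSpace X]
    (p q : ENNReal) [Fact (1 ≤ p)] [Fact (1 ≤ q)]
    (hp : 1 < p) (hp' : p ≠ ⊤) (hpq : 1 / p + 1 / q = 1)
    (xs : lp (fun _ : ℕ => X) p) (hxs : ‖xs‖ = 1) (hne : ∀ i, xs i ≠ 0)
    (S : Set (lp (fun _ : ℕ => StrongDual ℝ X) q))
    (hS : S = {ψ | ‖ψ‖ = 1 ∧ ∑' i, ψ i (xs i) = 1})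
    (φ : lp (fun _ : ℕ => StrongDual ℝ X) q) (hφ : φ ∈ S) :
    @ContinuousWithinAt _ _ (wStarTop p q) inferInstance id S φ ↔
      ∀ i, @ContinuousWithinAt _ _ (wStarTopDual X) inferInstance id
        {g : StrongDual ℝ X | ‖g‖ = 1 ∧ g (‖xs i‖⁻¹ • xs i) = 1}
        (‖φ i‖⁻¹ • φ i) :=
  stmt7_general p q hp hp' hpq xs hxs hne S hS φ hφ
end

section
/- Let 1 < p < ∞ and (x_i) ∈ ℓ^p(X) with ‖(x_i)‖_p = 1. Then S_{(x_i)} is norm compact in ℓ^q(X*) if and only if for each i ∈ ℕ with x_i ≠ 0, the state space S_{x_i/‖x_i‖} is norm compact in X*. -/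
/-!
If `ψ` is a state of `(x_i)`, then
`1 = ∑ ψ_i(x_i) ≤ ∑ ‖ψ_i‖ ‖x_i‖ ≤ ∑ (‖ψ_i‖^q / q + ‖x_i‖^p / p) = 1`,
so Young's inequality is an equality in every coordinate. Hence `S_{(x_i)}` is the "box" of
sequences with `ψ_i ∈ J(x_i) = {g | ‖g‖ = ‖x_i‖^(p-1), g(x_i) = ‖x_i‖^p}`, and `J(x_i)` is
`S_{x_i/‖x_i‖}` scaled by `‖x_i‖^(p-1)` (or `{0}` if `x_i = 0`). A box in `ℓ^q` whose factors are
dominated by a sequence in `ℓ^q` is compact iff every factor is: one direction projects onto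
a coordinate; for the other, by dominated convergence the `ℓ^q` and product topologies agree
on the box, and Tychonoff applies.
-/

open Filter Topology Pointwise

theorem eq_of_le_of_hasSum_of_hasSum {ι : Type*} {f g : ι → ℝ} {a : ℝ} (h : f ≤ g)
    (hf : HasSum f a) (hg : HasSum g a) : f = g := by
  have hdiff :=
    (hasSum_zero_iff_of_nonneg fun i => sub_nonneg.2 (h i)).1 (by simpa using hg.sub hf)
  exact (sub_eq_zero.1 hdiff).symm

theorem Real.rpow_sub_one_mul_self {b r : ℝ} (hb : 0 ≤ b) (hr : r ≠ 0) :
    b ^ (r - 1) * b = b ^ r := by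
  conv_rhs => rw [← sub_add_cancel r 1, Real.rpow_add' hb (by simpa using hr), Real.rpow_one]

namespace lp

variable {ι : Type*} {E : ι → Type*} [∀ i, NormedAddCommGroup (E i)] {p : ENNReal} [Fact (1 ≤ p)]

theorem norm_eq_one_iff_hasSum (hp : 0 < p.toReal) (f : lp E p) :
    ‖f‖ = 1 ↔ HasSum (fun i => ‖f i‖ ^ p.toReal) 1 := by
  rw [← Real.rpow_left_inj (norm_nonneg f) zero_le_one hp.ne', Real.one_rpow]
  exact ⟨fun h => h ▸ hasSum_norm hp f, (hasSum_norm hp f).unique⟩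

theorem tendsto_of_tendsto_apply_of_norm_le {α : Type*} {l : Filter α} (hp : p ≠ ⊤)
    {F : α → lp E p} {f : lp E p} (hF : ∀ i, Tendsto (fun a => F a i) l (𝓝 (f i)))
    {C : ι → ℝ} (hC : Summable fun i => C i ^ p.toReal)
    (hFC : ∀ᶠ a in l, ∀ i, ‖F a i‖ ≤ C i) (hfC : ∀ i, ‖f i‖ ≤ C i) :
    Tendsto F l (𝓝 f) := by
  have hp0 : 0 < p.toReal := ENNReal.toReal_pos (zero_lt_one.trans_le Fact.out).ne' hp
  have hsum : Tendsto (fun a => ∑' i, ‖F a i - f i‖ ^ p.toReal) l (𝓝 0) := by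
    have h := tendsto_tsum_of_dominated_convergence (𝓕 := l)
      (f := fun a i => ‖F a i - f i‖ ^ p.toReal) (g := 0) (hC.mul_left (2 ^ p.toReal))
      (fun i => ?_) ?_
    · simpa using h
    · have := ((hF i).sub_const (f i)).norm.rpow_const (Or.inr hp0.le)
      simpa [Real.zero_rpow hp0.ne'] using this
    · filter_upwards [hFC] with a ha i
      rw [Real.norm_of_nonneg (by positivity),
        ← Real.mul_rpow zero_le_two ((norm_nonneg _).trans (hfC i))]
      gcongr
      linarith [norm_sub_le (F a i) (f i), ha i, hfC i]
  rw [tendsto_iff_norm_sub_tendsto_zero]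
  have h := hsum.rpow_const (p := 1 / p.toReal) (Or.inr (by positivity))
  rw [Real.zero_rpow (by positivity)] at h
  refine h.congr fun a => ?_
  rw [norm_eq_tsum_rpow hp0]
  rfl

theorem isCompact_setOf_forall_mem (hp : p ≠ ⊤) {K : ∀ i, Set (E i)} (hK : ∀ i, IsCompact (K i))
    {C : ι → ℝ} (hC : Summable fun i => C i ^ p.toReal) (hKC : ∀ i, ∀ x ∈ K i, ‖x‖ ≤ C i) :
    IsCompact {f : lp E p | ∀ i, f i ∈ K i} := by
  have hp0 : 0 ≤ p.toReal := ENNReal.toReal_nonneg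
  set T := Set.univ.pi K
  have : CompactSpace T := isCompact_iff_compactSpace.mp (isCompact_univ_pi hK)
  have hmem (f : T) : Memℓp (f : ∀ i, E i) p :=
    memℓp_gen <| hC.of_nonneg_of_le (fun i => by positivity) fun i =>
      Real.rpow_le_rpow (norm_nonneg _) (hKC i _ (f.2 i trivial)) hp0
  let Φ : T → lp E p := fun f => ⟨f.1, hmem f⟩
  have hΦ : Continuous Φ := continuous_iff_continuousAt.mpr fun f =>
    tendsto_of_tendsto_apply_of_norm_le hp
      (fun i => ((continuous_apply i).comp continuous_subtype_val).tendsto f) hC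
      (Eventually.of_forall fun g i => hKC i _ (g.2 i trivial)) fun i => hKC i _ (f.2 i trivial)
  convert isCompact_range hΦ
  ext f
  exact ⟨fun hf => ⟨⟨f.1, fun i _ => hf i⟩, rfl⟩, by rintro ⟨g, rfl⟩ i; exact g.2 i trivial⟩

theorem isCompact_of_isCompact_setOf_forall_mem {K : ∀ i, Set (E i)} (hK : ∀ i, (K i).Nonempty)
    {C : ι → ℝ} (hC : Summable fun i => C i ^ p.toReal) (hKC : ∀ i, ∀ x ∈ K i, ‖x‖ ≤ C i)
    (h : IsCompact {f : lp E p | ∀ i, f i ∈ K i}) (i : ι) : IsCompact (K i) := by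
  classical
  have hp0 : p ≠ 0 := (zero_lt_one.trans_le Fact.out).ne'
  have heval : Continuous fun f : lp E p => f i :=
    (LipschitzWith.mk_one fun f g => by
      simpa only [dist_eq_norm, coeFn_sub, Pi.sub_apply] using
        norm_apply_le_norm hp0 (f - g) i).continuous
  convert h.image heval
  refine Set.Subset.antisymm (fun x hx => ?_) (by rintro _ ⟨f, hf, rfl⟩; exact hf i)
  choose φ hφ using hK
  have hmem (j : ι) : Function.update φ i x j ∈ K j := by
    rcases eq_or_ne j i with rfl | hj
    · simpa using hx
    · simpa [hj] using hφ j
  refine ⟨⟨Function.update φ i x, memℓp_gen ?_⟩, hmem, by simp⟩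
  exact hC.of_nonneg_of_le (fun j => by positivity) fun j =>
    Real.rpow_le_rpow (norm_nonneg _) (hKC j _ (hmem j)) ENNReal.toReal_nonneg

theorem isCompact_setOf_forall_mem_iff (hp : p ≠ ⊤) {K : ∀ i, Set (E i)}
    (hK : ∀ i, (K i).Nonempty) {C : ι → ℝ} (hC : Summable fun i => C i ^ p.toReal)
    (hKC : ∀ i, ∀ x ∈ K i, ‖x‖ ≤ C i) :
    IsCompact {f : lp E p | ∀ i, f i ∈ K i} ↔ ∀ i, IsCompact (K i) :=
  ⟨isCompact_of_isCompact_setOf_forall_mem hK hC hKC,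
    fun h => isCompact_setOf_forall_mem hp h hC hKC⟩

end lp

section DualityMap

variable {X : Type*} [NormedAddCommGroup X] [NormedSpace ℝ X]

-- The duality mapping `J_r` of `X` with gauge `t ↦ t ^ (r - 1)`.
def dualityMap (r : ℝ) (x : X) : Set (StrongDual ℝ X) :=
  {g | ‖g‖ = ‖x‖ ^ (r - 1) ∧ g x = ‖x‖ ^ r}

theorem dualityMap_zero {r : ℝ} (hr : 1 < r) : dualityMap r (0 : X) = {0} := by
  ext g
  simp [dualityMap, Real.zero_rpow (sub_ne_zero.2 hr.ne'),
    Real.zero_rpow (zero_lt_one.trans hr).ne']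

theorem dualityMap_nonempty {r : ℝ} (hr : 1 < r) (x : X) : (dualityMap r x).Nonempty := by
  rcases eq_or_ne x 0 with rfl | hx
  · exact (dualityMap_zero (X := X) hr) ▸ Set.singleton_nonempty 0
  obtain ⟨g, hg, hgx⟩ := exists_dual_vector ℝ x (norm_ne_zero_iff.2 hx)
  refine ⟨‖x‖ ^ (r - 1) • g, ?_, ?_⟩
  · rw [norm_smul, hg, mul_one, Real.norm_of_nonneg (by positivity)]
  · simp [hgx, Real.rpow_sub_one_mul_self (norm_nonneg x) (zero_lt_one.trans hr).ne']

theorem dualityMap_eq_smul {r : ℝ} {x : X} (hx : x ≠ 0) :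
    dualityMap r x = ‖x‖ ^ (r - 1) • {g : StrongDual ℝ X | ‖g‖ = 1 ∧ g (‖x‖⁻¹ • x) = 1} := by
  have hb : 0 < ‖x‖ := norm_pos_iff.2 hx
  have hc : 0 < ‖x‖ ^ (r - 1) := by positivity
  have hxr : ‖x‖ ^ r = ‖x‖ ^ (r - 1) * ‖x‖ := by
    rw [Real.rpow_sub_one hb.ne', div_mul_cancel₀ _ hb.ne']
  ext g
  rw [Set.mem_smul_set_iff_inv_smul_mem₀ hc.ne']
  simp only [dualityMap, Set.mem_ofPred_eq, norm_smul, map_smul, smul_apply, smul_eq_mul, norm_inv,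
    Real.norm_of_nonneg hc.le, hxr, inv_mul_eq_one₀ hc.ne', ← mul_assoc, ← mul_inv,
    eq_comm (a := ‖g‖), mul_comm ‖x‖]
  rw [inv_mul_eq_one₀ (mul_pos hc hb).ne', eq_comm (a := g x)]

theorem isCompact_dualityMap_iff {r : ℝ} {x : X} (hx : x ≠ 0) :
    IsCompact (dualityMap r x) ↔
      IsCompact {g : StrongDual ℝ X | ‖g‖ = 1 ∧ g (‖x‖⁻¹ • x) = 1} := by
  have hc : ‖x‖ ^ (r - 1) ≠ 0 := (Real.rpow_pos_of_pos (norm_pos_iff.2 hx) _).ne'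
  rw [dualityMap_eq_smul hx]
  exact ⟨fun h => by simpa [inv_smul_smul₀ hc] using h.smul (‖x‖ ^ (r - 1))⁻¹, fun h => h.smul _⟩

variable {ι : Type*} {p q : ENNReal} [Fact (1 ≤ p)] [Fact (1 ≤ q)]

theorem mem_dualityMap_of_norm_eq_one_of_tsum_eq_one (hpq : p.toReal.HolderConjugate q.toReal)
    {x : lp (fun _ : ι => X) p} (hx : ‖x‖ = 1) {ψ : lp (fun _ : ι => StrongDual ℝ X) q}
    (hψ : ‖ψ‖ = 1) (hψx : ∑' i, ψ i (x i) = 1) (i : ι) : ψ i ∈ dualityMap p.toReal (x i) := by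
  set p' := p.toReal
  set q' := q.toReal
  have hx' := (lp.norm_eq_one_iff_hasSum hpq.pos x).1 hx
  have hψ' := (lp.norm_eq_one_iff_hasSum hpq.symm.pos ψ).1 hψ
  have hsummable : Summable fun i => ψ i (x i) :=
    by_contra fun h => one_ne_zero (hψx.symm.trans (tsum_eq_zero_of_not_summable h))
  have hle_norm (i : ι) : ψ i (x i) ≤ ‖ψ i‖ * ‖x i‖ := (le_abs_self _).trans ((ψ i).le_opNorm _)
  have hyoung (i : ι) : ‖ψ i‖ * ‖x i‖ ≤ ‖ψ i‖ ^ q' / q' + ‖x i‖ ^ p' / p' :=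
    Real.young_inequality_of_nonneg (norm_nonneg _) (norm_nonneg _) hpq.symm
  have hsum_young : HasSum (fun i => ‖ψ i‖ ^ q' / q' + ‖x i‖ ^ p' / p') 1 := by
    simpa [add_comm q'⁻¹, hpq.inv_add_inv_eq_one] using
      (hψ'.div_const q').add (hx'.div_const p')
  -- the termwise inequalities have the same sum, so they are equalities
  have heq := congrFun (eq_of_le_of_hasSum_of_hasSum (fun i => (hle_norm i).trans (hyoung i))
    hsummable.hasSum (hψx ▸ hsum_young)) i
  have hψx_i : ψ i (x i) = ‖ψ i‖ * ‖x i‖ := le_antisymm (hle_norm i) (heq ▸ hyoung i)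
  have hpow : ‖ψ i‖ ^ q' = (‖x i‖ ^ (p' - 1)) ^ q' := by
    rw [← Real.rpow_mul (norm_nonneg _), hpq.sub_one_mul_conj]
    exact (Real.young_inequality_eq_iff_of_nonneg (norm_nonneg _) (norm_nonneg _) hpq.symm).1
      (hψx_i ▸ heq)
  have hnorm : ‖ψ i‖ = ‖x i‖ ^ (p' - 1) :=
    (Real.rpow_left_inj (norm_nonneg _) (by positivity) hpq.symm.ne_zero).1 hpow
  exact ⟨hnorm, by rw [hψx_i, hnorm, Real.rpow_sub_one_mul_self (norm_nonneg _) hpq.ne_zero]⟩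

theorem states_eq_setOf_forall_mem_dualityMap (hpq : p.toReal.HolderConjugate q.toReal)
    {x : lp (fun _ : ι => X) p} (hx : ‖x‖ = 1) :
    {ψ : lp (fun _ : ι => StrongDual ℝ X) q | ‖ψ‖ = 1 ∧ ∑' i, ψ i (x i) = 1} =
      {ψ | ∀ i, ψ i ∈ dualityMap p.toReal (x i)} := by
  ext ψ
  refine ⟨fun hψ => mem_dualityMap_of_norm_eq_one_of_tsum_eq_one hpq hx hψ.1 hψ.2, fun hψ => ?_⟩
  have hx' := (lp.norm_eq_one_iff_hasSum hpq.pos x).1 hx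
  have hpow (i : ι) : ‖ψ i‖ ^ q.toReal = ‖x i‖ ^ p.toReal := by
    rw [(hψ i).1, ← Real.rpow_mul (norm_nonneg _), hpq.sub_one_mul_conj]
  refine ⟨(lp.norm_eq_one_iff_hasSum hpq.symm.pos ψ).2 (by simpa only [hpow] using hx'), ?_⟩
  simpa only [(hψ _).2] using hx'.tsum_eq

end DualityMap

theorem stmt9_general {X : Type*} [NormedAddCommGroup X] [NormedSpace ℝ X]
    (p q : ENNReal) [Fact (1 ≤ p)] [Fact (1 ≤ q)]
    (hp : 1 < p) (hp' : p ≠ ⊤) (hpq : 1 / p + 1 / q = 1)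
    (xs : lp (fun _ : ℕ => X) p) (hxs : ‖xs‖ = 1) :
    IsCompact {ψ : lp (fun _ : ℕ => StrongDual ℝ X) q |
        ‖ψ‖ = 1 ∧ ∑' i, ψ i (xs i) = 1} ↔
      ∀ i, xs i ≠ 0 → IsCompact
        {g : StrongDual ℝ X | ‖g‖ = 1 ∧ g (‖xs i‖⁻¹ • xs i) = 1} := by
  have hp1 : 1 < p.toReal := by
    simpa using (ENNReal.toReal_lt_toReal ENNReal.one_ne_top hp').2 hp
  have hpq' : p.toReal.HolderConjugate q.toReal :=
    (ENNReal.HolderConjugate.toReal_iff hp1).2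
      (ENNReal.holderConjugate_iff.2 (by simpa only [one_div] using hpq))
  have hC : Summable fun i => (‖xs i‖ ^ (p.toReal - 1)) ^ q.toReal := by
    simp_rw [← Real.rpow_mul (norm_nonneg _), hpq'.sub_one_mul_conj]
    exact ((lp.norm_eq_one_iff_hasSum hpq'.pos xs).1 hxs).summable
  have hq : q ≠ ⊤ := (ENNReal.toReal_pos_iff.1 hpq'.symm.pos).2.ne
  rw [states_eq_setOf_forall_mem_dualityMap hpq' hxs, lp.isCompact_setOf_forall_mem_iff
    hq (fun i => dualityMap_nonempty hp1 (xs i)) hC (fun i g hg => hg.1.le)]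
  refine forall_congr' fun i => ?_
  rcases eq_or_ne (xs i) 0 with h0 | h0
  · simp [h0, dualityMap_zero hp1]
  · simp [h0, isCompact_dualityMap_iff h0]

/-- Let `(x_i) ∈ ℓ^p(X)` be a unit vector.  The state space
`S_{(x_i)} = {(x_i*) ∈ ℓ^q(X*) : ‖(x_i*)‖_q = 1, ∑ x_i*(x_i) = 1}` is norm compact
iff for each `i` with `x_i ≠ 0` the state space `S_{x_i/‖x_i‖} ⊆ X*` is norm compact. -/
theorem stmt9 {X : Type*} [NormedAddCommGroup X] [NormedSpace ℝ X] [CompleteSpace X]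
    (p q : ENNReal) [Fact (1 ≤ p)] [Fact (1 ≤ q)]
    (hp : 1 < p) (hp' : p ≠ ⊤) (hpq : 1 / p + 1 / q = 1)
    (xs : lp (fun _ : ℕ => X) p) (hxs : ‖xs‖ = 1) :
    IsCompact {ψ : lp (fun _ : ℕ => StrongDual ℝ X) q |
        ‖ψ‖ = 1 ∧ ∑' i, ψ i (xs i) = 1} ↔
      ∀ i, xs i ≠ 0 → IsCompact
        {g : StrongDual ℝ X | ‖g‖ = 1 ∧ g (‖xs i‖⁻¹ • xs i) = 1} :=
  stmt9_general p q hp hp' hpq xs hxs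
end

section
/- Let (Ω, Σ, μ) be a probability space, X a Banach space, f ∈ L^p(μ, X) with ‖f‖ = 1, and g ∈ S̃_f. Then g(ω)(f(ω)) = ‖g(ω)‖·‖f(ω)‖ for almost every ω; in particular, for a.e. ω with f(ω) ≠ 0 one has g(ω)/‖g(ω)‖ ∈ S_{f(ω)/‖f(ω)‖}, and g(ω) = 0 exactly when f(ω) = 0 (a.e.) in the case 1 < p < ∞. -/
/-!
Pointwise `g ω (f ω) ≤ ‖g ω‖ * ‖f ω‖`, and by Hölder `∫ ‖g‖ ‖f‖ ≤ ‖g‖_q ‖f‖_p ≤ 1 = ∫ g(f)`,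
so the nonnegative gap `‖g‖ ‖f‖ - g(f)` integrates to zero. For `g ω ≠ 0` wherever `f ω ≠ 0`,
cut `f` down to the support of `g`: the pairing is unchanged, so by Hölder the truncation still
has `L^p` norm at least `1 = ‖f‖_p`, and since `p < ∞` it cannot have lost any mass.
When `p > 1` also `q < ∞` and the same argument with the roles of `f` and `g` exchanged applies.
-/

open MeasureTheory NormedSpace
open scoped ENNReal

section Holder

variable {Ω E F : Type*} [MeasurableSpace Ω] {μ : Measure Ω}
  [NormedAddCommGroup E] [NormedAddCommGroup F] {p q : ℝ≥0∞} [p.HolderConjugate q]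
  {f : Ω → E} {g : Ω → F}

theorem integral_le_toReal_eLpNorm_mul_toReal_eLpNorm {b : E → F → ℝ}
    (hb : ∀ x y, ‖b x y‖ ≤ ‖x‖ * ‖y‖) (hf : MemLp f p μ) (hg : MemLp g q μ) :
    ∫ ω, b (f ω) (g ω) ∂μ ≤ (eLpNorm f p μ).toReal * (eLpNorm g q μ).toReal := by
  have hHolder : eLpNorm (fun ω => b (f ω) (g ω)) 1 μ ≤ eLpNorm f p μ * eLpNorm g q μ := by
    simpa using eLpNorm_le_eLpNorm_mul_eLpNorm_of_nnnorm hf.1 hg.1 b 1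
      (.of_forall fun ω => by simpa [← NNReal.coe_le_coe] using hb (f ω) (g ω))
  calc ∫ ω, b (f ω) (g ω) ∂μ ≤ ‖∫ ω, b (f ω) (g ω) ∂μ‖ := Real.le_norm_self _
    _ ≤ (∫⁻ ω, ENNReal.ofReal ‖b (f ω) (g ω)‖ ∂μ).toReal := norm_integral_le_lintegral_norm _
    _ = (eLpNorm (fun ω => b (f ω) (g ω)) 1 μ).toReal := by
      simp_rw [eLpNorm_one_eq_lintegral_enorm, ofReal_norm]
    _ ≤ (eLpNorm f p μ * eLpNorm g q μ).toReal :=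
      ENNReal.toReal_mono (ENNReal.mul_ne_top hf.eLpNorm_ne_top hg.eLpNorm_ne_top) hHolder
    _ = _ := ENNReal.toReal_mul

theorem one_le_eLpNorm_of_one_le_integral {b : E → F → ℝ}
    (hb : ∀ x y, ‖b x y‖ ≤ ‖x‖ * ‖y‖) (hf : MemLp f p μ) (hg : MemLp g q μ)
    (hg1 : eLpNorm g q μ ≤ 1) (h : 1 ≤ ∫ ω, b (f ω) (g ω) ∂μ) : 1 ≤ eLpNorm f p μ := by
  have hg1' : (eLpNorm g q μ).toReal ≤ 1 := by
    simpa using ENNReal.toReal_mono ENNReal.one_ne_top hg1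
  have hHolder := h.trans (integral_le_toReal_eLpNorm_mul_toReal_eLpNorm hb hf hg)
  have hf1 : 1 ≤ (eLpNorm f p μ).toReal := by
    nlinarith [ENNReal.toReal_nonneg (a := eLpNorm f p μ)]
  simpa using (ENNReal.ofReal_le_iff_le_toReal hf.eLpNorm_ne_top).mpr hf1

theorem ae_eq_zero_of_eLpNorm_le_eLpNorm_indicator {r : ℝ≥0∞} (hr0 : r ≠ 0) (hr : r ≠ ∞)
    {u : Ω → E} (hu : MemLp u r μ) {s : Set Ω} (h : eLpNorm u r μ ≤ eLpNorm (s.indicator u) r μ) :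
    ∀ᵐ ω ∂μ, ω ∉ s → u ω = 0 := by
  have hr_pos : 0 < r.toReal := ENNReal.toReal_pos hr0 hr
  have hle : ∀ ω, ‖s.indicator u ω‖ₑ ^ r.toReal ≤ ‖u ω‖ₑ ^ r.toReal := fun ω =>
    ENNReal.rpow_le_rpow (enorm_indicator_le_enorm_self u ω) hr_pos.le
  have hlint : ∫⁻ ω, ‖u ω‖ₑ ^ r.toReal ∂μ ≤ ∫⁻ ω, ‖s.indicator u ω‖ₑ ^ r.toReal ∂μ := by
    rwa [eLpNorm_eq_lintegral_rpow_enorm_toReal hr0 hr,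
      eLpNorm_eq_lintegral_rpow_enorm_toReal hr0 hr,
      ENNReal.rpow_le_rpow_iff (by simpa using hr_pos)] at h
  have hfin : ∫⁻ ω, ‖s.indicator u ω‖ₑ ^ r.toReal ∂μ ≠ ∞ :=
    ((lintegral_mono hle).trans_lt (lintegral_rpow_enorm_lt_top_of_eLpNorm_lt_top hr0 hr hu.2)).ne
  filter_upwards [ae_eq_of_ae_le_of_lintegral_le (.of_forall hle) hfin
    (hu.1.enorm.pow_const _) hlint] with ω hω hωs
  simpa [Set.indicator_of_notMem hωs, hr_pos, hr_pos.ne', eq_comm] using hω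

theorem ae_ne_zero_of_ne_zero_of_one_le_integral {b : E → F → ℝ}
    (hb : ∀ x y, ‖b x y‖ ≤ ‖x‖ * ‖y‖) (hp : p ≠ ∞) (hf : MemLp f p μ) (hg : MemLp g q μ)
    (hf1 : eLpNorm f p μ ≤ 1) (hg1 : eLpNorm g q μ ≤ 1) (h : 1 ≤ ∫ ω, b (f ω) (g ω) ∂μ) :
    ∀ᵐ ω ∂μ, f ω ≠ 0 → g ω ≠ 0 := by
  set s := Function.support g
  have hb0 : ∀ x, b x 0 = 0 := fun x => norm_le_zero_iff.mp (by simpa using hb x 0)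
  have hfs : MemLp (s.indicator f) p μ :=
    ⟨hf.1.indicator₀ hg.1.nullMeasurableSet_support, (eLpNorm_indicator_le f).trans_lt hf.2⟩
  have hpair : ∀ ω, b (s.indicator f ω) (g ω) = b (f ω) (g ω) := fun ω => by
    by_cases hω : g ω = 0 <;> simp [s, hω, hb0]
  have hfs1 : 1 ≤ eLpNorm (s.indicator f) p μ :=
    one_le_eLpNorm_of_one_le_integral hb hfs hg hg1 (by simpa only [hpair] using h)
  filter_upwards [ae_eq_zero_of_eLpNorm_le_eLpNorm_indicator
    (ENNReal.HolderConjugate.ne_zero p q) hp hf (hf1.trans hfs1)] with ω hω hf0 hg0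
  exact hf0 (hω (by simpa [s] using hg0))

theorem ae_apply_eq_norm_mul_norm_of_one_le_integral [NormedSpace ℝ E] [NormedSpace ℝ F]
    (B : E →L[ℝ] F →L[ℝ] ℝ) (hB : ‖B‖ ≤ 1) (hf : MemLp f p μ) (hg : MemLp g q μ)
    (hf1 : eLpNorm f p μ ≤ 1) (hg1 : eLpNorm g q μ ≤ 1) (h : 1 ≤ ∫ ω, B (f ω) (g ω) ∂μ) :
    ∀ᵐ ω ∂μ, B (f ω) (g ω) = ‖f ω‖ * ‖g ω‖ := by
  have hB_le : ∀ x y, B x y ≤ ‖x‖ * ‖y‖ := fun x y => calc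
    B x y ≤ ‖B x y‖ := Real.le_norm_self _
    _ ≤ ‖B‖ * ‖x‖ * ‖y‖ := B.le_opNorm₂ x y
    _ ≤ ‖x‖ * ‖y‖ := by gcongr; exact mul_le_of_le_one_left (norm_nonneg x) hB
  have hprod_int : Integrable (fun ω => ‖f ω‖ * ‖g ω‖) μ :=
    memLp_one_iff_integrable.mp <| MemLp.of_bilin (fun x y => ‖x‖ * ‖y‖) 1 hf hg
      (hf.1.norm.mul hg.1.norm) (.of_forall fun ω => by simp)
  have hB_int : Integrable (fun ω => B (f ω) (g ω)) μ :=
    memLp_one_iff_integrable.mp (B.memLp_of_bilin 1 hf hg)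
  have hprod_le : ∫ ω, ‖f ω‖ * ‖g ω‖ ∂μ ≤ 1 := calc
    _ ≤ (eLpNorm f p μ).toReal * (eLpNorm g q μ).toReal :=
      integral_le_toReal_eLpNorm_mul_toReal_eLpNorm (b := fun x y => ‖x‖ * ‖y‖) (by simp) hf hg
    _ ≤ 1 * 1 := by
      gcongr
      · simpa using ENNReal.toReal_mono ENNReal.one_ne_top hf1
      · simpa using ENNReal.toReal_mono ENNReal.one_ne_top hg1
    _ = 1 := one_mul 1
  have hgap : ∫ ω, (‖f ω‖ * ‖g ω‖ - B (f ω) (g ω)) ∂μ = 0 := by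
    refine le_antisymm ?_ (integral_nonneg fun ω => sub_nonneg.mpr (hB_le _ _))
    rw [integral_sub hprod_int hB_int]
    linarith
  filter_upwards [(integral_eq_zero_iff_of_nonneg (fun ω => sub_nonneg.mpr (hB_le _ _))
    (hprod_int.sub hB_int)).mp hgap] with ω hω
  exact (sub_eq_zero.mp hω).symm

end Holder

theorem StrongDual.inv_norm_smul_apply_inv_norm_smul {X : Type*} [NormedAddCommGroup X]
    [NormedSpace ℝ X] {L : StrongDual ℝ X} {x : X} (hL : L ≠ 0) (hx : x ≠ 0)
    (h : L x = ‖L‖ * ‖x‖) : (‖L‖⁻¹ • L) (‖x‖⁻¹ • x) = 1 := by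
  have hL0 : ‖L‖ ≠ 0 := norm_ne_zero_iff.mpr hL
  have hx0 : ‖x‖ ≠ 0 := norm_ne_zero_iff.mpr hx
  rw [smul_apply, map_smul, h, smul_eq_mul, smul_eq_mul]
  field_simp

theorem stmt12_general {Ω : Type*} [MeasurableSpace Ω] (μ : Measure Ω)
    {X : Type*} [NormedAddCommGroup X] [NormedSpace ℝ X]
    (p q : ENNReal) (hp' : p ≠ ⊤) (hpq : 1 / p + 1 / q = 1)
    (f : Ω → X) (hf : MemLp f p μ) (hf1 : eLpNorm f p μ = 1)
    (g : Ω → StrongDual ℝ X)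
    (hg : MemLp g q μ) (hgn : eLpNorm g q μ ≤ 1)
    (hg1 : ∫ ω, g ω (f ω) ∂μ = 1) :
    (∀ᵐ ω ∂μ, g ω (f ω) = ‖g ω‖ * ‖f ω‖) ∧
    (∀ᵐ ω ∂μ, f ω ≠ 0 →
      ‖(‖g ω‖⁻¹ • g ω : StrongDual ℝ X)‖ = 1 ∧
      (‖g ω‖⁻¹ • g ω : StrongDual ℝ X) (‖f ω‖⁻¹ • f ω) = 1) ∧
    (1 < p → ∀ᵐ ω ∂μ, (g ω = 0 ↔ f ω = 0)) := by
  have : p.HolderConjugate q := ENNReal.holderConjugate_iff.mpr (by simpa using hpq)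
  -- the evaluation pairing `B x L = L x`
  set B := (ContinuousLinearMap.id ℝ (StrongDual ℝ X)).flip
  have hB : ‖B‖ ≤ 1 := by simpa [B] using ContinuousLinearMap.norm_id_le
  have hnorm : ∀ (L : StrongDual ℝ X) x, ‖L x‖ ≤ ‖L‖ * ‖x‖ := fun L x => L.le_opNorm x
  have hnorm' : ∀ x (L : StrongDual ℝ X), ‖L x‖ ≤ ‖x‖ * ‖L‖ := fun x L => by
    simpa only [mul_comm] using hnorm L x
  have hA := ae_apply_eq_norm_mul_norm_of_one_le_integral B hB hf hg hf1.le hgn hg1.ge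
  have hfg := ae_ne_zero_of_ne_zero_of_one_le_integral hnorm' hp' hf hg hf1.le hgn hg1.ge
  refine ⟨?_, ?_, fun hp1 => ?_⟩
  · filter_upwards [hA] with ω h
    simpa [B, mul_comm] using h
  · filter_upwards [hA, hfg] with ω h hsupp hf0
    have hg0 := hsupp hf0
    exact ⟨norm_smul_inv_norm hg0,
      StrongDual.inv_norm_smul_apply_inv_norm_smul hg0 hf0 (by simpa [B, mul_comm] using h)⟩
  · have hq : q ≠ ⊤ := ((ENNReal.HolderConjugate.lt_top_iff_one_lt q p).mpr hp1).ne
    filter_upwards [hfg, ae_ne_zero_of_ne_zero_of_one_le_integral hnorm hq hg hf hgn hf1.le hg1.ge]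
      with ω h1 h2
    tauto

/-- Let `μ` be a probability measure, `X` a Banach space, `f ∈ L^p(μ, X)` with `‖f‖ = 1`,
and `g ∈ S̃_f` (i.e. `g ∈ L^q(μ, X*)`, `‖g‖_q ≤ 1`, `∫ g(ω)(f(ω)) dμ = 1`).  Then
`g(ω)(f(ω)) = ‖g(ω)‖·‖f(ω)‖` a.e.; in particular for a.e. `ω` with `f(ω) ≠ 0` the
normalized functional `g(ω)/‖g(ω)‖` belongs to `S_{f(ω)/‖f(ω)‖}`, and when `1 < p < ∞`,
`g(ω) = 0` exactly when `f(ω) = 0` (a.e.). -/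
theorem stmt12 {Ω : Type*} [MeasurableSpace Ω] (μ : Measure Ω) [IsProbabilityMeasure μ]
    {X : Type*} [NormedAddCommGroup X] [NormedSpace ℝ X] [CompleteSpace X]
    (p q : ENNReal) (hp : 1 ≤ p) (hp' : p ≠ ⊤) (hpq : 1 / p + 1 / q = 1)
    (f : Ω → X) (hf : MemLp f p μ) (hf1 : eLpNorm f p μ = 1)
    (g : Ω → StrongDual ℝ X)
    (hg : MemLp g q μ) (hgn : eLpNorm g q μ ≤ 1)
    (hgi : Integrable (fun ω => g ω (f ω)) μ)
    (hg1 : ∫ ω, g ω (f ω) ∂μ = 1) :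
    (∀ᵐ ω ∂μ, g ω (f ω) = ‖g ω‖ * ‖f ω‖) ∧
    (∀ᵐ ω ∂μ, f ω ≠ 0 →
      ‖(‖g ω‖⁻¹ • g ω : StrongDual ℝ X)‖ = 1 ∧
      (‖g ω‖⁻¹ • g ω : StrongDual ℝ X) (‖f ω‖⁻¹ • f ω) = 1) ∧
    (1 < p → ∀ᵐ ω ∂μ, (g ω = 0 ↔ f ω = 0)) :=
  stmt12_general μ p q hp' hpq f hf hf1 g hg hgn hg1
end
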